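/- (Theorem 2, individual certification, for kNN) Let X be a metric space, c ≥ 2, k a natural number, ρ : X × Fin c → ℕ injective, D a multiset over X × Fin c, and let (x_1,y_1),…,(x_t,y_t) be a testing dataset with x_i : X and y_i ∈ Fin c. For each i, let a_i := kNN_k(D,x_i), s_l^{(i)} := s_l(N_k(D,x_i)), let b_i be the largest label among those l ≠ a_i attaining the maximum of s_l^{(i)} over l ≠ a_i, and set e_i* := ⌈(s_{a_i}^{(i)} − s_{b_i}^{(i)} + 𝟙(b_i < a_i))/2⌉ − 1 ∈ ℤ. Then for every natural number e and every multiset D* over X × Fin c with S(D,D*) ≤ e, the number of indices i with kNN_k(D*,x_i) = y_i is at least the number of indices i with a_i = y_i and (e : ℤ) ≤ e_i*. -/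

import Mathlib

/-- Poisoning size between two multisets: `max (card A) (card B) - card (A ∩ B)`. -/
noncomputable def pSize {α : Type*} (A B : Multiset α) : ℕ :=
  haveI := Classical.decEq α
  max A.card B.card - (A ∩ B).card

/-- Number of votes for label `l` in a multiset of labeled examples (counted with
multiplicity). -/
def votes {X : Type*} {c : ℕ} (T : Multiset (X × Fin c)) (l : Fin c) : ℕ :=
  T.countP (fun p => p.2 = l)

/-- Tie-broken majority label: the largest label (in the order of `Fin c`) among the
labels attaining the maximum vote count. -/
noncomputable def majLabel {X : Type*} {c : ℕ} (hc : 0 < c) (T : Multiset (X × Fin c)) :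
    Fin c :=
  (Finset.univ.filter (fun l : Fin c => ∀ l', votes T l' ≤ votes T l)).max'
    (by
      haveI : NeZero c := ⟨hc.ne'⟩
      obtain ⟨b, -, hb⟩ := Finset.exists_max_image (Finset.univ : Finset (Fin c)) (votes T)
        Finset.univ_nonempty
      exact ⟨b, Finset.mem_filter.mpr ⟨Finset.mem_univ b, fun l' => hb l' (Finset.mem_univ l')⟩⟩)

/-- The largest label, among those `l ≠ a`, attaining the maximum of `s l` over `l ≠ a`. -/
noncomputable def secondLabel {c : ℕ} (hc : 2 ≤ c) (s : Fin c → ℕ) (a : Fin c) : Fin c :=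
  (Finset.univ.filter (fun l : Fin c => l ≠ a ∧ ∀ l', l' ≠ a → s l' ≤ s l)).max'
    (by
      have h1 : 1 < Fintype.card (Fin c) := by rw [Fintype.card_fin]; omega
      obtain ⟨l0, hl0⟩ := Fintype.exists_ne_of_one_lt_card h1 a
      have hne : (Finset.univ.filter (fun l : Fin c => l ≠ a)).Nonempty :=
        ⟨l0, Finset.mem_filter.mpr ⟨Finset.mem_univ _, hl0⟩⟩
      obtain ⟨b, hb, hbmax⟩ := Finset.exists_max_image _ s hne
      refine ⟨b, Finset.mem_filter.mpr ⟨Finset.mem_univ _, (Finset.mem_filter.mp hb).2, ?_⟩⟩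
      intro l' hl'
      exact hbmax l' (Finset.mem_filter.mpr ⟨Finset.mem_univ _, hl'⟩))

/-- The kNN ordering w.r.t. a test input `x`, with ties broken by the ranking `ρ`
(larger ranks first): `p` precedes `q` iff `dist p.1 x < dist q.1 x`, or
`dist p.1 x = dist q.1 x` and `ρ p ≥ ρ q`. -/
def knnLE {X : Type*} [MetricSpace X] {c : ℕ} (ρ : X × Fin c → ℕ) (x : X)
    (p q : X × Fin c) : Prop :=
  dist p.1 x < dist q.1 x ∨ (dist p.1 x = dist q.1 x ∧ ρ q ≤ ρ p)

/-- kNN neighbor multiset: the first `min k (card D)` elements of `D` in the order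
`knnLE ρ x` (sort `D` by this order and take the first `k`). -/
noncomputable def Nk {X : Type*} [MetricSpace X] {c : ℕ} {ρ : X × Fin c → ℕ}
    (hρ : Function.Injective ρ) (k : ℕ) (D : Multiset (X × Fin c)) (x : X) :
    Multiset (X × Fin c) :=
  haveI : DecidableRel (knnLE ρ x) := Classical.decRel _
  haveI : IsTrans _ (knnLE ρ x) := ⟨by
    rintro p q s (h1 | ⟨h1, h1'⟩) (h2 | ⟨h2, h2'⟩)
    · exact Or.inl (h1.trans h2)
    · exact Or.inl (h1.trans_eq h2)
    · exact Or.inl (h1.trans_lt h2)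
    · exact Or.inr ⟨h1.trans h2, h2'.trans h1'⟩⟩
  haveI : IsAntisymm _ (knnLE ρ x) := ⟨by
    rintro p q (h1 | ⟨h1, h1'⟩) (h2 | ⟨h2, h2'⟩)
    · exact absurd h2 (lt_asymm h1)
    · exact absurd h2.symm h1.ne
    · exact absurd h1.symm h2.ne
    · exact hρ (le_antisymm h2' h1')⟩
  haveI : IsTotal _ (knnLE ρ x) := ⟨by
    intro p q
    rcases lt_trichotomy (dist p.1 x) (dist q.1 x) with h | h | h
    · exact Or.inl (Or.inl h)
    · rcases le_total (ρ q) (ρ p) with h' | h'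
      · exact Or.inl (Or.inr ⟨h, h'⟩)
      · exact Or.inr (Or.inr ⟨h.symm, h'⟩)
    · exact Or.inr (Or.inl h)⟩
  (↑((D.sort (knnLE ρ x)).take k) : Multiset (X × Fin c))

/-- kNN prediction: tie-broken majority label among the kNN neighbors. -/
noncomputable def kNNpred {X : Type*} [MetricSpace X] {c : ℕ} (hc : 0 < c)
    {ρ : X × Fin c → ℕ} (hρ : Function.Injective ρ) (k : ℕ)
    (D : Multiset (X × Fin c)) (x : X) : Fin c :=
  majLabel hc (Nk hρ k D x)

/-!
Fix a test input `x` and let `T`, `T*` be its `k` nearest neighbours in `D` and in `D*`.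
Both training sets contain all but at most `e` points of `D ∩ D*`, so the first
`min k |D| - e` neighbours of `x` inside `D ∩ D*` lie in `T` and in `T*`. Hence `T` and `T*`
each exceed `T ∩ T*` by at most `e` points, and every vote count changes by at most `e`.
The condition `e ≤ e*` says that the lead of `a` over the runner-up `b`, plus one when the
tie-break favours `a`, exceeds `2e`, which such a perturbation cannot overturn.
-/

theorem List.Sublist.take_sublist_take_add {α : Type*} {l₁ l₂ : List α} (h : l₁.Sublist l₂)
    (m : ℕ) : (l₁.take m).Sublist (l₂.take (m + (l₂.length - l₁.length))) := by
  induction h generalizing m with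
  | slnil => simp
  | @cons l₁ l₂ a h ih =>
    rw [List.length_cons, Nat.sub_add_comm h.length_le, ← add_assoc, List.take_succ_cons]
    exact (ih m).cons a
  | @cons_cons l₁ l₂ a h ih =>
    cases m with
    | zero => simp
    | succ m =>
      rw [List.length_cons, List.length_cons, Nat.add_sub_add_right, Nat.add_right_comm,
        List.take_succ_cons, List.take_succ_cons]
      exact (ih m).cons_cons a

theorem Multiset.coe_take_sort_le_coe_take_sort {α : Type*} (r : α → α → Prop)
    [DecidableRel r] [IsTrans α r] [Std.Antisymm r] [Std.Total r] {s t : Multiset α}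
    (h : s ≤ t) {m k : ℕ} (hmk : m + (card t - card s) ≤ k) :
    (((s.sort r).take m : List α) : Multiset α) ≤ ((t.sort r).take k : List α) := by
  have hsub : (s.sort r).Sublist (t.sort r) :=
    List.sublist_of_subperm_of_pairwise (by rwa [← Multiset.coe_le, sort_eq, sort_eq])
      (pairwise_sort s r) (pairwise_sort t r)
  refine Multiset.coe_le.mpr (List.Sublist.subperm ?_)
  refine (hsub.take_sublist_take_add m).trans (List.take_sublist_take_left ?_)
  rwa [length_sort, length_sort]

theorem card_sub_card_inter_le_pSize {α : Type*} [DecidableEq α] (A B : Multiset α) :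
    Multiset.card A - Multiset.card (A ∩ B) ≤ pSize A B := by
  unfold pSize
  convert Nat.sub_le_sub_right (le_max_left A.card B.card) _

theorem pSize_comm {α : Type*} (A B : Multiset α) : pSize A B = pSize B A := by
  unfold pSize
  rw [@Multiset.inter_comm _ (Classical.decEq α), max_comm]

section votes

variable {X : Type*} {c : ℕ}

theorem votes_le_votes_add_card_sub {T T' : Multiset (X × Fin c)}
    (h : T ≤ T') (l : Fin c) : votes T' l ≤ votes T l + (Multiset.card T' - Multiset.card T) := by
  obtain ⟨R, rfl⟩ := Multiset.le_iff_exists_add.mp h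
  have := Multiset.countP_le_card (fun p : X × Fin c => p.2 = l) R
  simp only [votes, Multiset.countP_add, Multiset.card_add]
  omega

theorem votes_le_votes_add_of_card_le_card_inter_add [DecidableEq (X × Fin c)]
    {T T' : Multiset (X × Fin c)} {e : ℕ}
    (h : Multiset.card T ≤ Multiset.card (T ∩ T') + e) (l : Fin c) :
    votes T l ≤ votes T' l + e := by
  have := votes_le_votes_add_card_sub Multiset.inter_le_left (T := T ∩ T') l
  have := Multiset.countP_le_of_le (fun p : X × Fin c => p.2 = l)
    (Multiset.inter_le_right (s := T) (t := T'))
  unfold votes at *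
  omega

theorem majLabel_eq_of_votes (hc : 0 < c) {T : Multiset (X × Fin c)}
    {a : Fin c} (hle : ∀ l, votes T l ≤ votes T a) (hlt : ∀ l, a < l → votes T l < votes T a) :
    majLabel hc T = a := by
  refine le_antisymm (Finset.max'_le _ _ _ fun l hl => ?_)
    (Finset.le_max' _ _ (Finset.mem_filter.mpr ⟨Finset.mem_univ _, hle⟩))
  by_contra! hal
  exact (hlt l hal).not_ge ((Finset.mem_filter.mp hl).2 a)

end votes

section secondLabel

variable {c : ℕ} (hc : 2 ≤ c) (s : Fin c → ℕ) {a l : Fin c}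

theorem apply_le_apply_secondLabel (hla : l ≠ a) : s l ≤ s (secondLabel hc s a) :=
  (Finset.mem_filter.mp (Finset.max'_mem _ _ : secondLabel hc s a ∈ _)).2.2 l hla

theorem apply_lt_apply_secondLabel (hla : l ≠ a) (hl : secondLabel hc s a < l) :
    s l < s (secondLabel hc s a) := by
  refine (apply_le_apply_secondLabel hc s hla).lt_of_ne fun heq => hl.not_ge ?_
  refine Finset.le_max' _ _ (Finset.mem_filter.mpr ⟨Finset.mem_univ _, hla, fun l' hl' => ?_⟩)
  exact heq ▸ apply_le_apply_secondLabel hc s hl'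

end secondLabel

theorem majLabel_eq_of_margin {X : Type*} {c : ℕ} (hc : 2 ≤ c)
    {T T' : Multiset (X × Fin c)} {a : Fin c} {e : ℕ}
    (hgap : 2 * (e : ℤ) < (votes T a : ℤ) - votes T (secondLabel hc (votes T) a) +
      if secondLabel hc (votes T) a < a then 1 else 0)
    (hT : ∀ l, votes T l ≤ votes T' l + e) (hT' : ∀ l, votes T' l ≤ votes T l + e) :
    majLabel (by omega) T' = a := by
  have hle := fun l => apply_le_apply_secondLabel (a := a) (l := l) hc (votes T)
  have hlt := fun l => apply_lt_apply_secondLabel (a := a) (l := l) hc (votes T)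
  generalize secondLabel hc (votes T) a = b at *
  have := hT a
  refine majLabel_eq_of_votes _ (fun l => ?_) (fun l hal => ?_)
  · rcases eq_or_ne l a with rfl | hla
    · rfl
    have := hT' l
    have := hle l hla
    split_ifs at hgap <;> omega
  · -- `l` beats `a` on ties; if `b < a` then also `b < l`, so `l` trails `b` strictly,
    -- which makes up for the unit of margin the tie-break bonus added
    have := hT' l
    by_cases hba : b < a
    · have := hlt l hal.ne' (hba.trans hal)
      rw [if_pos hba] at hgap
      omega
    · have := hle l hal.ne'
      rw [if_neg hba] at hgap
      omega

theorem two_mul_lt_of_le_ceil_half_sub_one {n M : ℤ} (h : n ≤ ⌈(M : ℚ) / 2⌉ - 1) :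
    2 * n < M := by
  have : (n : ℚ) < M / 2 := Int.lt_ceil.mp (by omega)
  have : ((2 * n : ℤ) : ℚ) < M := by push_cast; linarith
  exact_mod_cast this

section kNN

variable {X : Type*} [MetricSpace X] {c : ℕ} {ρ : X × Fin c → ℕ}

theorem knnLE_isTrans (x : X) : IsTrans _ (knnLE ρ x) where
  trans := by
    rintro p q s (h₁ | ⟨h₁, h₁'⟩) (h₂ | ⟨h₂, h₂'⟩)
    · exact .inl (h₁.trans h₂)
    · exact .inl (h₁.trans_eq h₂)
    · exact .inl (h₁.trans_lt h₂)
    · exact .inr ⟨h₁.trans h₂, h₂'.trans h₁'⟩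

theorem knnLE_antisymm (hρ : Function.Injective ρ) (x : X) : Std.Antisymm (knnLE ρ x) where
  antisymm := by
    rintro p q (h₁ | ⟨h₁, h₁'⟩) (h₂ | ⟨h₂, h₂'⟩)
    · exact absurd h₂ h₁.asymm
    · exact absurd h₂.symm h₁.ne
    · exact absurd h₁.symm h₂.ne
    · exact hρ (le_antisymm h₂' h₁')

theorem knnLE_total (x : X) : Std.Total (knnLE ρ x) where
  total p q := by
    rcases lt_trichotomy (dist p.1 x) (dist q.1 x) with h | h | h
    · exact .inl (.inl h)
    · rcases le_total (ρ q) (ρ p) with h' | h'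
      · exact .inl (.inr ⟨h, h'⟩)
      · exact .inr (.inr ⟨h.symm, h'⟩)
    · exact .inr (.inl h)

theorem Nk_le_Nk (hρ : Function.Injective ρ) {D D' : Multiset (X × Fin c)} (h : D ≤ D')
    {m k : ℕ} (hmk : m + (Multiset.card D' - Multiset.card D) ≤ k) (x : X) :
    Nk hρ m D x ≤ Nk hρ k D' x := by
  let _ := Classical.decRel (knnLE ρ x)
  have := knnLE_isTrans (ρ := ρ) x
  have := knnLE_antisymm hρ x
  have := knnLE_total (ρ := ρ) x
  exact Multiset.coe_take_sort_le_coe_take_sort _ h hmk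

theorem card_Nk (hρ : Function.Injective ρ) (k : ℕ) (D : Multiset (X × Fin c)) (x : X) :
    Multiset.card (Nk hρ k D x) = min k (Multiset.card D) := by
  simp only [Nk, Multiset.coe_card, List.length_take, Multiset.length_sort]

theorem card_Nk_le_card_inter_add [DecidableEq (X × Fin c)] (hρ : Function.Injective ρ)
    (k : ℕ) {D D' : Multiset (X × Fin c)} (x : X) {e : ℕ} (hD : pSize D D' ≤ e) :
    Multiset.card (Nk hρ k D x) ≤ Multiset.card (Nk hρ k D x ∩ Nk hρ k D' x) + e := by
  have hDI : Multiset.card D - Multiset.card (D ∩ D') ≤ e :=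
    (card_sub_card_inter_le_pSize D D').trans hD
  have hD'I : Multiset.card D' - Multiset.card (D ∩ D') ≤ e := by
    rw [Multiset.inter_comm]
    exact (card_sub_card_inter_le_pSize D' D).trans (pSize_comm D' D ▸ hD)
  rw [card_Nk]
  by_cases hsmall : min k (Multiset.card D) ≤ e
  · omega
  have hcommon : Nk hρ (min k (Multiset.card D) - e) (D ∩ D') x ≤ Nk hρ k D x ∩ Nk hρ k D' x :=
    Multiset.le_inter (Nk_le_Nk hρ Multiset.inter_le_left (by omega) x)
      (Nk_le_Nk hρ Multiset.inter_le_right (by omega) x)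
  have := Multiset.card_le_card hcommon
  rw [card_Nk] at this
  omega

theorem votes_Nk_le_votes_Nk_add (hρ : Function.Injective ρ) (k : ℕ)
    {D D' : Multiset (X × Fin c)} (x : X) {e : ℕ} (hD : pSize D D' ≤ e) (l : Fin c) :
    votes (Nk hρ k D x) l ≤ votes (Nk hρ k D' x) l + e := by
  classical
  exact votes_le_votes_add_of_card_le_card_inter_add (card_Nk_le_card_inter_add hρ k x hD) l

end kNN

/-- Theorem 2, individual certification, for kNN: for any poisoned dataset
with poisoning size at most `e`, the number of correctly classified testing examples is at
least the number of indices `i` with `a_i = y_i` and `e ≤ e_i*`. -/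
theorem knn_individual_certification {X : Type*} [MetricSpace X] {c : ℕ} (hc : 2 ≤ c)
    (k : ℕ) {ρ : X × Fin c → ℕ} (hρ : Function.Injective ρ)
    (D : Multiset (X × Fin c)) {t : ℕ} (xs : Fin t → X) (ys : Fin t → Fin c)
    (a b : Fin t → Fin c) (estar : Fin t → ℤ)
    (ha : ∀ i, a i = kNNpred (by omega : 0 < c) hρ k D (xs i))
    (hb : ∀ i, b i = secondLabel hc (fun l => votes (Nk hρ k D (xs i)) l) (a i))
    (he : ∀ i, estar i =
      ⌈(((votes (Nk hρ k D (xs i)) (a i) : ℤ) - (votes (Nk hρ k D (xs i)) (b i) : ℤ) +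
          if b i < a i then 1 else 0 : ℤ) : ℚ) / 2⌉ - 1)
    (e : ℕ) (Dstar : Multiset (X × Fin c)) (hD : pSize D Dstar ≤ e) :
    (Finset.univ.filter (fun i => a i = ys i ∧ (e : ℤ) ≤ estar i)).card ≤
      (Finset.univ.filter
        (fun i => kNNpred (by omega : 0 < c) hρ k Dstar (xs i) = ys i)).card := by
  refine Finset.card_le_card (Finset.monotone_filter_right _ ?_)
  rintro i - ⟨hay, hei⟩
  have hgap := two_mul_lt_of_le_ceil_half_sub_one (hei.trans_eq (he i))
  rw [hb i, ha i] at hgap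
  rw [← hay, ha i]
  exact majLabel_eq_of_margin hc hgap (votes_Nk_le_votes_Nk_add hρ k _ hD)
    (votes_Nk_le_votes_Nk_add hρ k _ (pSize_comm D Dstar ▸ hD))
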